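/- Let λ₁ > 0, λ₂ > 0, α > 0 and θ ∈ [-1, 1], let D = λ₂α/(λ₁+λ₂α) + θλ₁·(2/(2λ₁+λ₂α) + 1/(λ₁+2λ₂α) - 2/(λ₁+λ₂α)), K = λ₁/D, and set p₁ = K/λ₁, p₂ = -K(1+θ)/(λ₁+λ₂α), p₃ = 2Kθ/(2λ₁+λ₂α), p₄ = Kθ/(λ₁+2λ₂α), p₅ = -Kθ/(λ₁+λ₂α). Then for every real t with t < λ₁ and every x₀ > 0, ∫₀^{x₀} e^{tx} · K e^{-λ₁x}(1 - e^{-λ₂αx})(1 - θe^{-λ₂αx}(1 - 2e^{-λ₁x})) dx = p₁λ₁(1-e^{-(λ₁-t)x₀})/(λ₁-t) + p₂(λ₁+λ₂α)(1-e^{-(λ₁+λ₂α-t)x₀})/(λ₁+λ₂α-t) + p₃(2λ₁+λ₂α)(1-e^{-(2λ₁+λ₂α-t)x₀})/(2λ₁+λ₂α-t) + p₄(λ₁+2λ₂α)(1-e^{-(λ₁+2λ₂α-t)x₀})/(λ₁+2λ₂α-t) + 2p₅(λ₁+λ₂α)(1-e^{-(2λ₁+2λ₂α-t)x₀})/(2λ₁+2λ₂α-t).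 -/

import Mathlib

/-! Multiplied out, `e^{tx} f^w(x)` is a combination of the five exponentials
`e^{-(mλ₁ + nλ₂α - t)x}` with `(m, n) ∈ {(1,0), (1,1), (2,1), (1,2), (2,2)}`, whose rates are
positive because `t < λ₁`. Each integrates over `[0, x₀]` to `(1 - e^{-rate·x₀}) / rate`, and each
`pᵢ` times the displayed rate factor is exactly the corresponding coefficient. -/

open MeasureTheory Real

theorem integral_exp_neg_mul {a : ℝ} (ha : a ≠ 0) (x₀ : ℝ) :
    ∫ x in (0 : ℝ)..x₀, exp (-a * x) = (1 - exp (-a * x₀)) / a := by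
  rw [intervalIntegral.integral_comp_mul_left exp (neg_ne_zero.mpr ha), integral_exp,
    mul_zero, exp_zero, smul_eq_mul]
  field_simp
  ring

theorem integral_sum_mul_exp_neg_mul {ι : Type*} (s : Finset ι) (c a : ι → ℝ)
    (ha : ∀ i ∈ s, a i ≠ 0) (x₀ : ℝ) :
    ∫ x in (0 : ℝ)..x₀, ∑ i ∈ s, c i * exp (-a i * x)
      = ∑ i ∈ s, c i * (1 - exp (-a i * x₀)) / a i := by
  rw [intervalIntegral.integral_finsetSum fun i _ =>
    (by fun_prop : Continuous _).intervalIntegrable _ _]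
  refine Finset.sum_congr rfl fun i hi => ?_
  rw [intervalIntegral.integral_const_mul, integral_exp_neg_mul (ha i hi), mul_div_assoc]

theorem exp_mul_mul_exp_pow_mul_exp_pow (t a b x : ℝ) (m n : ℕ) :
    exp (t * x) * exp (-a * x) ^ m * exp (-b * x) ^ n = exp (-(m * a + n * b - t) * x) := by
  rw [← exp_nat_mul, ← exp_nat_mul, ← exp_add, ← exp_add]
  ring_nf

theorem exp_mul_gwed_density_eq_sum (l₁ β θ K t x : ℝ) :
    exp (t * x) * (K * exp (-l₁ * x) * (1 - exp (-β * x))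
        * (1 - θ * exp (-β * x) * (1 - 2 * exp (-l₁ * x))))
      = ∑ i : Fin 5, ![K, -(K * (1 + θ)), 2 * K * θ, K * θ, -(2 * K * θ)] i
          * exp (-![l₁ - t, l₁ + β - t, 2 * l₁ + β - t, l₁ + 2 * β - t, 2 * l₁ + 2 * β - t] i
            * x) := by
  have h := exp_mul_mul_exp_pow_mul_exp_pow t l₁ β x
  simp only [Fin.sum_univ_five, Matrix.cons_val]
  calc _ = K * (exp (t * x) * exp (-l₁ * x) ^ 1 * exp (-β * x) ^ 0)
        - K * (1 + θ) * (exp (t * x) * exp (-l₁ * x) ^ 1 * exp (-β * x) ^ 1)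
        + 2 * K * θ * (exp (t * x) * exp (-l₁ * x) ^ 2 * exp (-β * x) ^ 1)
        + K * θ * (exp (t * x) * exp (-l₁ * x) ^ 1 * exp (-β * x) ^ 2)
        - 2 * K * θ * (exp (t * x) * exp (-l₁ * x) ^ 2 * exp (-β * x) ^ 2) := by ring
    _ = _ := by simp only [h]; push_cast; ring_nf

theorem gwed_conditional_mgf
    (l₁ l₂ α θ : ℝ) (hl₁ : 0 < l₁) (hl₂ : 0 < l₂) (hα : 0 < α)
    (K p₁ p₂ p₃ p₄ p₅ : ℝ)
    (hp₁ : p₁ = K / l₁)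
    (hp₂ : p₂ = -(K * (1 + θ)) / (l₁ + l₂ * α))
    (hp₃ : p₃ = 2 * K * θ / (2 * l₁ + l₂ * α))
    (hp₄ : p₄ = K * θ / (l₁ + 2 * l₂ * α))
    (hp₅ : p₅ = -(K * θ) / (l₁ + l₂ * α)) :
    ∀ t : ℝ, t < l₁ → ∀ x₀ : ℝ, 0 < x₀ →
      (∫ x in (0 : ℝ)..x₀,
          Real.exp (t * x) * (K * Real.exp (-l₁ * x) * (1 - Real.exp (-l₂ * α * x))
            * (1 - θ * Real.exp (-l₂ * α * x) * (1 - 2 * Real.exp (-l₁ * x)))))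
        = p₁ * l₁ * (1 - Real.exp (-(l₁ - t) * x₀)) / (l₁ - t)
          + p₂ * (l₁ + l₂ * α) * (1 - Real.exp (-(l₁ + l₂ * α - t) * x₀))
              / (l₁ + l₂ * α - t)
          + p₃ * (2 * l₁ + l₂ * α) * (1 - Real.exp (-(2 * l₁ + l₂ * α - t) * x₀))
              / (2 * l₁ + l₂ * α - t)
          + p₄ * (l₁ + 2 * l₂ * α) * (1 - Real.exp (-(l₁ + 2 * l₂ * α - t) * x₀))
              / (l₁ + 2 * l₂ * α - t)
          + 2 * p₅ * (l₁ + l₂ * α) * (1 - Real.exp (-(2 * l₁ + 2 * l₂ * α - t) * x₀))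
              / (2 * l₁ + 2 * l₂ * α - t) := by
  intro t ht x₀ _
  have hβ : 0 < l₂ * α := mul_pos hl₂ hα
  have hrates : ∀ i, 0 < ![l₁ - t, l₁ + l₂ * α - t, 2 * l₁ + l₂ * α - t, l₁ + 2 * (l₂ * α) - t,
      2 * l₁ + 2 * (l₂ * α) - t] i := by
    intro i; fin_cases i <;> dsimp <;> linarith
  simp_rw [neg_mul l₂ α, exp_mul_gwed_density_eq_sum,
    integral_sum_mul_exp_neg_mul _ _ _ fun i _ => (hrates i).ne']
  simp only [Fin.sum_univ_five, Matrix.cons_val]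
  subst hp₁ hp₂ hp₃ hp₄ hp₅
  field_simp
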